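/- Let $\mathfrak{l}$ be a maximal ideal of a Dedekind domain (or more simply, let $A_\mathfrak{l}$ be a complete discrete valuation ring with fraction field $Q_\mathfrak{l}$ and uniformizer $y$). Let $V$ be a finite-dimensional $Q_\mathfrak{l}$-vector space with a linear action of a group $G$, and let $T \subseteq V$ be a $G$-stable $A_\mathfrak{l}$-lattice (a finitely generated $A_\mathfrak{l}$-submodule spanning $V$). Then the fixed subspace $V^G$ is nonzero if and only if the fixed submodule $(V/T)^G$ is infinite. -/

import Mathlib

open IsLocalRing Submodule

theorem finite_of_finite_sub_quot {R M : Type*} [Ring R] [AddCommGroup M] [Module R M]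
    (N : Submodule R M) [Finite N] [Finite (M ⧸ N)] : Finite M := by
  have key : ∀ m : M, m - (Submodule.Quotient.mk m : M ⧸ N).out ∈ N := by
    intro m
    rw [← Submodule.Quotient.eq]
    exact (Quotient.out_eq _).symm
  apply Finite.of_injective (β := (M ⧸ N) × N)
    (fun m => ((Submodule.Quotient.mk m : M ⧸ N),
      ⟨m - (Submodule.Quotient.mk m : M ⧸ N).out, key m⟩))
  intro m m' h
  have h1 : (Submodule.Quotient.mk m : M ⧸ N) = Submodule.Quotient.mk m' :=
    congrArg Prod.fst h
  have h2 : m - (Submodule.Quotient.mk m : M ⧸ N).out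
      = m' - (Submodule.Quotient.mk m' : M ⧸ N).out :=
    congrArg Subtype.val (congrArg Prod.snd h)
  rw [h1] at h2
  exact sub_left_inj.mp h2

theorem finite_of_fg_smul_torsion_one {A : Type*} [CommRing A] [IsLocalRing A]
    [Finite (IsLocalRing.ResidueField A)] (y : A) (hy : maximalIdeal A = Ideal.span {y})
    (P : Type*) [AddCommGroup P] [Module A P] [Module.Finite A P]
    (htor : ∀ p : P, y • p = 0) : Finite P := by
  classical
  obtain ⟨F, hF⟩ := Module.Finite.fg_top (R := A) (M := P)
  let e : (F → A) → P := fun a => ∑ i : F, a i • (i : P)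
  have he : Function.Surjective e := by
    intro p
    have hp : p ∈ Submodule.span A (F : Set P) := hF ▸ Submodule.mem_top
    obtain ⟨f, hf⟩ := mem_span_finset.mp hp
    refine ⟨fun i => f i, ?_⟩
    show (∑ i : F, f (i : P) • (i : P)) = p
    rw [← hf.2]
    exact F.sum_attach (fun i => f i • i)
  have hkey : ∀ a b : F → A, (∀ i, a i - b i ∈ maximalIdeal A) → e a = e b := by
    intro a b hab
    have : e a - e b = ∑ i : F, (a i - b i) • (i : P) := by
      simp [e, ← Finset.sum_sub_distrib, sub_smul]
    have hz : ∀ i : F, (a i - b i) • (i : P) = 0 := by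
      intro i
      have := hab i
      rw [hy, Ideal.mem_span_singleton] at this
      obtain ⟨r, hr⟩ := this
      rw [hr, mul_comm, mul_smul, htor, smul_zero]
    rw [Finset.sum_congr rfl (fun i _ => hz i), Finset.sum_const_zero] at this
    exact sub_eq_zero.mp this
  haveI : Finite (A ⧸ maximalIdeal A) := ‹Finite (IsLocalRing.ResidueField A)›
  apply Finite.of_surjective
    (f := fun w : F → A ⧸ (maximalIdeal A) => e fun i => (w i).out)
  intro p
  obtain ⟨a, rfl⟩ := he p
  refine ⟨fun i => Submodule.Quotient.mk (a i), hkey _ _ fun i => ?_⟩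
  rw [← Submodule.Quotient.eq]
  exact Quotient.out_eq _

universe u in
theorem finite_of_fg_smul_torsion {A : Type*} [CommRing A] [IsLocalRing A]
    [Finite (IsLocalRing.ResidueField A)] (y : A) (hy : maximalIdeal A = Ideal.span {y})
    (c : ℕ) :
    ∀ (P : Type u) [AddCommGroup P] [Module A P] [Module.Finite A P],
      (∀ p : P, y ^ c • p = 0) → Finite P := by
  induction c with
  | zero =>
    intro P _ _ _ h
    have : Subsingleton P := subsingleton_of_forall_eq 0 fun p => by simpa using h p
    infer_instance
  | succ c ih =>
    intro P _ _ _ h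
    let f : P →ₗ[A] P := LinearMap.lsmul A P y
    let Q : Submodule A P := LinearMap.range f
    haveI : Module.Finite A Q := by
      rw [Module.Finite.iff_fg]; show (LinearMap.range f).FG; rw [LinearMap.range_eq_map]
      exact (Module.Finite.fg_top (R := A) (M := P)).map f
    haveI : Finite Q := by
      refine ih Q fun q => ?_
      obtain ⟨p, hp⟩ := q.2
      apply Subtype.ext
      show y ^ c • (q : P) = 0
      rw [← hp]
      show y ^ c • (y • p) = 0
      rw [← mul_smul, ← pow_succ, h]
    haveI : Finite (P ⧸ Q) := by
      refine finite_of_fg_smul_torsion_one y hy _ fun p' => ?_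
      obtain ⟨p, rfl⟩ := Submodule.Quotient.mk_surjective Q p'
      rw [← Submodule.Quotient.mk_smul, Submodule.Quotient.mk_eq_zero]
      exact ⟨p, rfl⟩
    exact finite_of_finite_sub_quot Q

/-- Imai-type abstract lemma (Lemma 4.1 / KT13 Lemma 2.1): for a complete DVR `A` with
finite residue field, fraction field `K`, a finite-dimensional `K`-representation `V` of a
group `G` and a `G`-stable `A`-lattice `T ⊆ V`, the fixed space `V^G` is nonzero iff
`(V/T)^G` is infinite. -/
theorem stmt0 {A : Type*} [CommRing A] [IsDomain A] [IsDiscreteValuationRing A]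
    [IsAdicComplete (IsLocalRing.maximalIdeal A) A]
    [Finite (IsLocalRing.ResidueField A)]
    {K : Type*} [Field K] [Algebra A K] [IsFractionRing A K]
    {V : Type*} [AddCommGroup V] [Module K V] [Module A V] [IsScalarTower A K V]
    [FiniteDimensional K V]
    {G : Type*} [Group G] (ρ : Representation K G V)
    (T : Submodule A V) (hTfg : T.FG)
    (hTspan : Submodule.span K (T : Set V) = ⊤)
    (hTstab : ∀ g : G, ∀ v ∈ T, ρ g v ∈ T) :
    (∃ v : V, v ≠ 0 ∧ ∀ g : G, ρ g v = v) ↔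
      {x : V ⧸ T | ∀ (g : G) (v : V),
        Submodule.Quotient.mk v = x → Submodule.Quotient.mk (ρ g v) = x}.Infinite := by
  classical
  obtain ⟨y, hyirr⟩ := IsDiscreteValuationRing.exists_irreducible A
  have hym : IsLocalRing.maximalIdeal A = Ideal.span {y} :=
    (IsDiscreteValuationRing.irreducible_iff_uniformizer y).mp hyirr
  have halg : Function.Injective (algebraMap A K) := IsFractionRing.injective A K
  -- every vector is brought into T by a power of y
  have hpow : ∀ v : V, ∃ n : ℕ, (y ^ n : A) • v ∈ T := by
    intro v
    have hv : v ∈ Submodule.span K (T : Set V) := hTspan ▸ Submodule.mem_top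
    induction hv using Submodule.span_induction with
    | mem x hx => exact ⟨0, by simpa using hx⟩
    | zero => exact ⟨0, by simp⟩
    | add x z hx hz ihx ihz =>
      obtain ⟨n, hn⟩ := ihx; obtain ⟨m, hm⟩ := ihz
      refine ⟨n + m, ?_⟩
      rw [smul_add]
      refine T.add_mem ?_ ?_
      · rw [pow_add, mul_comm, mul_smul]; exact T.smul_mem _ hn
      · rw [pow_add, mul_smul]; exact T.smul_mem _ hm
    | smul k x hx ih =>
      obtain ⟨n, hn⟩ := ih
      obtain ⟨a, s, hs, rfl⟩ := IsFractionRing.div_surjective (A := A) k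
      have hs0 : s ≠ 0 := nonZeroDivisors.ne_zero hs
      obtain ⟨c, u, hsu⟩ := IsDiscreteValuationRing.eq_unit_mul_pow_irreducible hs0 hyirr
      refine ⟨c + n, ?_⟩
      have hsK : algebraMap A K s ≠ 0 :=
        IsFractionRing.to_map_ne_zero_of_mem_nonZeroDivisors hs
      have hscal : algebraMap A K (y ^ (c + n)) * (algebraMap A K a / algebraMap A K s)
          = algebraMap A K (a * ↑u⁻¹ * y ^ n) := by
        rw [← mul_div_assoc, div_eq_iff hsK, ← map_mul, ← map_mul]
        congr 1
        rw [hsu]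
        have h2 : (↑u⁻¹ : A) * ↑u = 1 := u.inv_mul
        calc y ^ (c + n) * a = a * ((↑u⁻¹ : A) * ↑u) * (y ^ n * y ^ c) := by
              rw [h2, mul_one, ← pow_add, add_comm n c]; ring
          _ = a * ↑u⁻¹ * y ^ n * (↑u * y ^ c) := by ring
      have : (y ^ (c + n) : A) • ((algebraMap A K a / algebraMap A K s) • x)
          = (a * ↑u⁻¹ : A) • ((y ^ n : A) • x) := by
        rw [← algebraMap_smul K (y ^ (c + n) : A), smul_smul, hscal,
          ← algebraMap_smul K (a * ↑u⁻¹ : A) ((y ^ n : A) • x),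
          ← algebraMap_smul K (y ^ n : A) x, smul_smul, ← map_mul]
      rw [this]
      exact T.smul_mem _ hn
  -- Hausdorff property of the lattice T
  have hhaus : ∀ v : V, (∀ m : ℕ, ∃ t ∈ T, v = (y ^ m : A) • t) → v = 0 := by
    intro v hv
    have hvT : v ∈ T := by
      obtain ⟨t, ht, e⟩ := hv 0
      rw [e, pow_zero, one_smul]; exact ht
    haveI : Module.Finite A T := Module.Finite.iff_fg.mpr hTfg
    haveI : NoZeroSMulDivisors A T := by
      refine ⟨fun {a t} h => ?_⟩
      by_cases ha : a = 0
      · exact Or.inl ha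
      · refine Or.inr ?_
        have hval : a • (t : V) = 0 := by
          have := congrArg (Subtype.val) h; simpa using this
        rw [← algebraMap_smul K a (t : V)] at hval
        have : (t : V) = 0 := by
          rcases smul_eq_zero.mp hval with h' | h'
          · exact absurd (halg (by simpa using h')) ha
          · exact h'
        exact Subtype.ext this
    haveI : Module.Free A T := Module.free_of_finite_type_torsion_free'
    let b := Module.Free.chooseBasis A T
    set vT : T := (⟨v, hvT⟩ : T) with hvTdef
    have hcoord : ∀ i, b.repr vT i = 0 := by
      intro i
      have hdvd : ∀ m : ℕ, y ^ m ∣ b.repr vT i := by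
        intro m
        obtain ⟨t, ht, e⟩ := hv m
        have heq : vT = (y ^ m : A) • (⟨t, ht⟩ : T) := Subtype.ext (by simpa using e)
        rw [heq, map_smul]
        exact ⟨b.repr ⟨t, ht⟩ i, by simp⟩
      refine IsHausdorff.haus (inferInstance : IsHausdorff (IsLocalRing.maximalIdeal A) A)
        _ fun n => ?_
      rw [SModEq.zero]
      obtain ⟨cc, hcc⟩ := hdvd n
      rw [hcc]
      have h1 : y ^ n ∈ (IsLocalRing.maximalIdeal A) ^ n := by
        rw [hym]; exact Ideal.pow_mem_pow (Ideal.mem_span_singleton_self y) n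
      have : y ^ n * cc = y ^ n • cc := rfl
      rw [this]
      exact Submodule.smul_mem_smul h1 Submodule.mem_top
    have hrepr : b.repr vT = 0 := Finsupp.ext hcoord
    have : vT = 0 := by
      have := b.repr.map_eq_zero_iff.mp hrepr
      exact this
    have := congrArg Subtype.val this
    exact this
  constructor
  · -- forward direction
    rintro ⟨v, hv0, hfix⟩
    set π : K := algebraMap A K y with hπdef
    have hπ0 : π ≠ 0 := fun h => hyirr.ne_zero (halg (by simpa [hπdef] using h))
    by_contra hfin
    rw [Set.not_infinite] at hfin
    have hmem : ∀ n : ℕ, (Submodule.Quotient.mk ((π⁻¹ ^ n) • v) : V ⧸ T) ∈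
        {x : V ⧸ T | ∀ (g : G) (w : V),
          Submodule.Quotient.mk w = x → Submodule.Quotient.mk (ρ g w) = x} := by
      intro n g w hw
      rw [Submodule.Quotient.eq] at hw ⊢
      have h1 : ρ g w - π⁻¹ ^ n • v = ρ g (w - π⁻¹ ^ n • v) := by
        rw [map_sub, map_smul, hfix]
      rw [h1]
      exact hTstab g _ hw
    have main : ∀ n m : ℕ, n < m →
        (Submodule.Quotient.mk (π⁻¹ ^ n • v) : V ⧸ T) = Submodule.Quotient.mk (π⁻¹ ^ m • v) →
        π⁻¹ ^ m • v ∈ T := by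
      intro n m hnm hmk
      rw [Submodule.Quotient.eq] at hmk
      set d := m - n with hd
      have hmnd : m = n + d := by omega
      have hu : IsUnit (y ^ d - 1) := by
        by_contra h
        have h1 : y ^ d - 1 ∈ IsLocalRing.maximalIdeal A :=
          (IsLocalRing.mem_maximalIdeal _).mpr h
        have hy : y ∈ IsLocalRing.maximalIdeal A :=
          (IsLocalRing.mem_maximalIdeal _).mpr hyirr.not_isUnit
        have h2 : y ^ d ∈ IsLocalRing.maximalIdeal A := by
          rw [show d = (d - 1) + 1 by omega, pow_succ]
          exact Ideal.mul_mem_left _ _ hy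
        have h3 : (1 : A) ∈ IsLocalRing.maximalIdeal A := by
          have := Submodule.sub_mem _ h2 h1; simpa using this
        exact (IsLocalRing.maximalIdeal.isMaximal A).ne_top ((Ideal.eq_top_iff_one _).mpr h3)
      obtain ⟨u, hu'⟩ := hu
      have hsub : (π⁻¹ ^ n - π⁻¹ ^ m) • v ∈ T := by rw [sub_smul]; exact hmk
      have hinv : π⁻¹ ^ d * π ^ d = 1 := by rw [← mul_pow, inv_mul_cancel₀ hπ0, one_pow]
      have hfac : π⁻¹ ^ n - π⁻¹ ^ m = π⁻¹ ^ m * algebraMap A K (↑u) := by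
        rw [hu', map_sub, map_pow, map_one, ← hπdef, hmnd]
        calc π⁻¹ ^ n - π⁻¹ ^ (n + d)
            = π⁻¹ ^ n * (π⁻¹ ^ d * π ^ d) - π⁻¹ ^ (n + d) := by rw [hinv, mul_one]
          _ = π⁻¹ ^ (n + d) * (π ^ d - 1) := by rw [pow_add]; ring
      rw [hfac] at hsub
      have hrw : π⁻¹ ^ m • v = (↑u⁻¹ : A) • ((π⁻¹ ^ m * algebraMap A K ↑u) • v) := by
        rw [← algebraMap_smul K (↑u⁻¹ : A), smul_smul]
        congr 1
        calc (π⁻¹ ^ m : K) = π⁻¹ ^ m * algebraMap A K (↑u * ↑u⁻¹) := by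
              rw [u.mul_inv, map_one, mul_one]
          _ = algebraMap A K ↑u⁻¹ * (π⁻¹ ^ m * algebraMap A K ↑u) := by rw [map_mul]; ring
      rw [hrw]
      exact T.smul_mem _ hsub
    have key : ∀ m₀ : ℕ, ∃ m, m₀ ≤ m ∧ π⁻¹ ^ m • v ∈ T := by
      intro m₀
      obtain ⟨a, ha, b, hb, hab, heq⟩ :=
        (Set.Ici_infinite m₀).exists_ne_map_eq_of_mapsTo
          (f := fun n : ℕ => (Submodule.Quotient.mk ((π⁻¹ ^ n) • v) : V ⧸ T))
          (fun n _ => hmem n) hfin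
      rcases lt_or_gt_of_ne hab with hlt | hlt
      · exact ⟨b, hb, main a b hlt heq⟩
      · exact ⟨a, ha, main b a hlt heq.symm⟩
    have hv' : ∀ m₀ : ℕ, ∃ t ∈ T, v = (y ^ m₀ : A) • t := by
      intro m₀
      obtain ⟨m, hm, hmT⟩ := key m₀
      refine ⟨(y : A) ^ (m - m₀) • (π⁻¹ ^ m • v), T.smul_mem _ hmT, ?_⟩
      rw [smul_smul, ← pow_add, Nat.add_sub_cancel' hm,
        ← algebraMap_smul K ((y : A) ^ m) (π⁻¹ ^ m • v), smul_smul, map_pow, ← hπdef,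
        ← mul_pow, mul_inv_cancel₀ hπ0, one_pow, one_smul]
    exact hv0 (hhaus v hv')
  · -- backward direction
    intro hinf
    by_contra hno
    push_neg at hno
    have hfix0 : ∀ v : V, (∀ g : G, ρ g v = v) → v = 0 := by
      intro v hv
      by_contra h0
      obtain ⟨g, hg⟩ := hno v h0
      exact hg (hv g)
    -- reduce to a finite set of group elements
    obtain ⟨s, hs⟩ : ∃ s : Finset G, ∀ v : V, (∀ g ∈ s, ρ g v = v) → v = 0 := by
      let W : Finset G → Submodule K V := fun s => ⨅ g ∈ s, LinearMap.ker (ρ g - 1)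
      let d : Finset G → ℕ := fun s => Module.finrank K (W s)
      have hne : (Set.range d).Nonempty := ⟨d ∅, ⟨∅, rfl⟩⟩
      obtain ⟨s, hsmin⟩ : ∃ s : Finset G, d s = sInf (Set.range d) := Nat.sInf_mem hne
      have hmemW : ∀ (t : Finset G) (v : V), v ∈ W t ↔ ∀ g ∈ t, ρ g v = v := by
        intro t v
        simp only [W, Submodule.mem_iInf, LinearMap.mem_ker, LinearMap.sub_apply,
          Module.End.one_apply, sub_eq_zero]
      have hWle : ∀ g : G, W s ≤ LinearMap.ker (ρ g - 1) := by
        intro g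
        have h1 : W (insert g s) ≤ W s := by
          intro v hv
          rw [hmemW] at hv ⊢
          exact fun g' hg' => hv g' (Finset.mem_insert_of_mem hg')
        have h2 : d s ≤ d (insert g s) := by
          rw [hsmin]; exact Nat.sInf_le ⟨insert g s, rfl⟩
        have h3 : W (insert g s) = W s := Submodule.eq_of_le_of_finrank_le h1 h2
        rw [← h3]
        intro v hv
        rw [hmemW] at hv
        rw [LinearMap.mem_ker, LinearMap.sub_apply, Module.End.one_apply, sub_eq_zero]
        exact hv g (Finset.mem_insert_self g s)
      refine ⟨s, fun v hv => hfix0 v fun g => ?_⟩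
      have hvW : v ∈ W s := (hmemW s v).mpr hv
      have := hWle g hvW
      rw [LinearMap.mem_ker, LinearMap.sub_apply, Module.End.one_apply, sub_eq_zero] at this
      exact this
    -- the big lattice L
    let f : V →ₗ[A] (s → V) :=
      LinearMap.pi fun g : s => (ρ g.1 - 1).restrictScalars A
    have hfapp : ∀ (v : V) (g : s), f v g = ρ g.1 v - v := fun v g => rfl
    let N : Submodule A (s → V) := Submodule.pi Set.univ fun _ => T
    let L : Submodule A V := N.comap f
    have hfinj : Function.Injective f := by
      rw [← LinearMap.ker_eq_bot]
      rw [eq_bot_iff]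
      intro v hv
      rw [LinearMap.mem_ker] at hv
      rw [Submodule.mem_bot]
      refine hs v fun g hg => ?_
      have := congrFun hv ⟨g, hg⟩
      rw [hfapp] at this
      simpa [sub_eq_zero] using this
    haveI hNT : IsNoetherian A T := isNoetherian_of_fg_of_noetherian T hTfg
    haveI : IsNoetherian A N := by
      have hjmem : ∀ (n : N) (g : s), (n : s → V) g ∈ T := by
        intro n g
        have := n.2
        rw [Submodule.mem_pi] at this
        exact this g (Set.mem_univ g)
      let j : N →ₗ[A] (s → T) :=
        LinearMap.pi fun g : s =>
          LinearMap.codRestrict T ((LinearMap.proj g).comp N.subtype) fun n => hjmem n g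
      refine isNoetherian_of_injective j ?_
      intro n n' h
      apply Subtype.ext
      funext g
      have := congrArg Subtype.val (congrFun h g)
      exact this
    have hmapfg : (L.map f).FG := by
      have h1 : L.map f ≤ N := Submodule.map_comap_le f N
      have h2 := (IsNoetherian.noetherian ((L.map f).comap N.subtype)).map N.subtype
      rwa [Submodule.map_comap_subtype, inf_eq_right.mpr h1] at h2
    have hLfg : L.FG := Submodule.fg_of_fg_map_injective f hfinj hmapfg
    -- a power of y maps L into T
    choose nn hnn using hpow
    have hLfg2 := hLfg
    obtain ⟨Fl, hFl⟩ := hLfg2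
    set c := Fl.sup nn with hcdef
    have hc : ∀ l ∈ L, (y ^ c : A) • l ∈ T := by
      intro l hl
      rw [← hFl] at hl
      induction hl using Submodule.span_induction with
      | mem x hx =>
        have h1 : nn x ≤ c := Finset.le_sup hx
        have h2 := hnn x
        rw [show c = (c - nn x) + nn x by omega, pow_add, mul_smul]
        exact T.smul_mem _ h2
      | zero => simp
      | add x z hx hz ihx ihz => rw [smul_add]; exact T.add_mem ihx ihz
      | smul a x hx ih =>
        rw [smul_comm]
        exact T.smul_mem _ ih
    -- the image of L in V ⧸ T is finite and contains the fixed set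
    let P : Submodule A (V ⧸ T) := L.map T.mkQ
    haveI : Module.Finite A P := Module.Finite.iff_fg.mpr (hLfg.map _)
    haveI hPfin : Finite P := by
      refine finite_of_fg_smul_torsion y hym c P fun p => ?_
      obtain ⟨q, hq⟩ := p
      obtain ⟨l, hl, hml⟩ := hq
      apply Subtype.ext
      show (y ^ c : A) • q = 0
      rw [← hml, ← map_smul, Submodule.mkQ_apply, Submodule.Quotient.mk_eq_zero]
      exact hc l hl
    refine hinf (Set.Finite.subset (Set.toFinite (P : Set (V ⧸ T))) ?_)
    intro x hx
    obtain ⟨v, rfl⟩ := Submodule.Quotient.mk_surjective T x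
    have hvL : v ∈ L := by
      show f v ∈ N
      rw [Submodule.mem_pi]
      intro g _
      rw [hfapp]
      rw [← Submodule.Quotient.eq]
      exact hx g.1 v rfl
    exact ⟨v, hvL, rfl⟩
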